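/- Under the hypotheses of the power-balance theorem (skew-adjointness conditions for (E, Q, J, K), S symmetric, N skew-symmetric, x a continuously differentiable solution of E ẋ = ((J−R)Q − EK)x + (B−P)u on I = [t0, tf] with output y = (B+P)ᵀQx + (S+N)u), assume additionally that the dissipation matrix vanishes identically, i.e. Q(t)ᵀ*R(t)*Q(t) = 0, Q(t)ᵀ*P(t) = 0 and S(t) = 0 for all t ∈ I. Then the Hamiltonian evolves according to exact power balance: for all t0 ≤ s ≤ t ≤ tf, (1/2)⟪x(t), (Q(t)ᵀ*E(t)) ⬝ x(t)⟫ − (1/2)⟪x(s), (Q(s)ᵀ*E(s)) ⬝ x(s)⟫ = ∫_s^t ⟪u(τ), y(τ)⟫ dτ. -/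

import Mathlib

/-!
Along a solution, the product rule gives `2 dℋ/dt = ẋᵀ(QᵀE)x + xᵀ(QᵀE)'x + xᵀ(QᵀE)ẋ`. Symmetry of
`QᵀE` merges the outer terms into `2 (Qx)ᵀ E ẋ`, into which the state equation is substituted;
the prescribed derivative of `QᵀE` then cancels the `J`- and `EK`-terms, and skew-symmetry of `N`
removes `N` from `uᵀy`, leaving `dℋ/dt = uᵀy − zᵀ W z` with `z = (x, u)`. When `W` vanishes, the
supply rate `uᵀy` is the derivative of `ℋ` and the fundamental theorem of calculus applies.
-/

open Matrix Set

/-- `M'` is the entrywise derivative of the matrix-valued function `M` at `t`. -/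
def MatHasDerivAt {α β : Type*} (M M' : ℝ → Matrix α β ℝ) (t : ℝ) : Prop :=
  ∀ i j, HasDerivAt (fun s => M s i j) (M' t i j) t

section ContinuousOn

variable {X R l m n : Type*} [TopologicalSpace X] [TopologicalSpace R] {s : Set X}

@[fun_prop]
theorem ContinuousOn.matrix_transpose {A : X → Matrix m n R} (hA : ContinuousOn A s) :
    ContinuousOn (fun x => (A x)ᵀ) s := by
  rw [continuousOn_iff_continuous_domRestrict] at *
  exact hA.matrix_transpose

variable [Fintype n] [NonUnitalNonAssocSemiring R] [IsTopologicalSemiring R]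

@[fun_prop]
theorem ContinuousOn.dotProduct {v w : X → n → R} (hv : ContinuousOn v s)
    (hw : ContinuousOn w s) : ContinuousOn (fun x => v x ⬝ᵥ w x) s := by
  rw [continuousOn_iff_continuous_domRestrict] at *
  exact hv.dotProduct hw

@[fun_prop]
theorem ContinuousOn.matrix_mul {A : X → Matrix l n R} {B : X → Matrix n m R}
    (hA : ContinuousOn A s) (hB : ContinuousOn B s) : ContinuousOn (fun x => A x * B x) s := by
  rw [continuousOn_iff_continuous_domRestrict] at *
  exact hA.matrix_mul hB

@[fun_prop]
theorem ContinuousOn.matrix_mulVec {A : X → Matrix m n R} {v : X → n → R}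
    (hA : ContinuousOn A s) (hv : ContinuousOn v s) : ContinuousOn (fun x => A x *ᵥ v x) s := by
  rw [continuousOn_iff_continuous_domRestrict] at *
  exact hA.matrix_mulVec hv

end ContinuousOn

theorem Matrix.sum_elim_dotProduct_sum_elim {α m n : Type*} [Fintype m] [Fintype n] [Mul α]
    [AddCommMonoid α] (a c : m → α) (b d : n → α) :
    Sum.elim a b ⬝ᵥ Sum.elim c d = a ⬝ᵥ c + b ⬝ᵥ d := by
  simp [dotProduct, Fintype.sum_sum_type]

theorem Matrix.dotProduct_transpose_mul_mulVec {α m n l : Type*} [Fintype m] [Fintype n]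
    [Fintype l] [CommSemiring α] (x : m → α) (Q : Matrix n m α) (A : Matrix n l α)
    (w : l → α) : x ⬝ᵥ (Qᵀ * A) *ᵥ w = Q *ᵥ x ⬝ᵥ A *ᵥ w := by
  rw [← mulVec_mulVec, dotProduct_transpose_mulVec, dotProduct_comm]

theorem Matrix.dotProduct_mulVec_self_eq_zero_of_transpose_eq_neg {α n : Type*} [Fintype n]
    [CommRing α] [NoZeroDivisors α] [CharZero α] {N : Matrix n n α} (hN : Nᵀ = -N)
    (u : n → α) : u ⬝ᵥ N *ᵥ u = 0 := by
  rw [← CharZero.neg_eq_self_iff, ← dotProduct_neg, ← neg_mulVec, ← hN,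
    dotProduct_transpose_mulVec]

section Calculus

variable {𝕜 ι : Type*} [NontriviallyNormedField 𝕜] [Fintype ι] {t : 𝕜}

theorem HasDerivAt.dotProduct {v w : 𝕜 → ι → 𝕜} {v' w' : ι → 𝕜} (hv : HasDerivAt v v' t)
    (hw : HasDerivAt w w' t) :
    HasDerivAt (fun s => v s ⬝ᵥ w s) (v' ⬝ᵥ w t + v t ⬝ᵥ w') t :=
  (HasDerivAt.fun_sum fun i _ =>
    (hasDerivAt_pi.mp hv i).fun_mul (hasDerivAt_pi.mp hw i)).congr_deriv Finset.sum_add_distrib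

theorem MatHasDerivAt.mulVec {κ : Type*} {M M' : ℝ → Matrix κ ι ℝ} {v : ℝ → ι → ℝ}
    {v' : ι → ℝ} {t : ℝ} (hM : MatHasDerivAt M M' t) (hv : HasDerivAt v v' t) :
    HasDerivAt (fun s => M s *ᵥ v s) (M' t *ᵥ v t + M t *ᵥ v') t :=
  hasDerivAt_pi.mpr fun i => (hasDerivAt_pi.mpr (hM i)).dotProduct hv

end Calculus

section PowerBalance

variable {𝕜 ι κ : Type*} [CommRing 𝕜] [Fintype ι] [Fintype κ]

def dissipationMatrix (Q R : Matrix ι ι 𝕜) (P : Matrix ι κ 𝕜) (S : Matrix κ κ 𝕜) :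
    Matrix (ι ⊕ κ) (ι ⊕ κ) 𝕜 :=
  fromBlocks (Qᵀ * R * Q) (Qᵀ * P) (Pᵀ * Q) S

omit [Fintype κ] in
theorem dissipationMatrix_eq_zero {Q R : Matrix ι ι 𝕜} {P : Matrix ι κ 𝕜} {S : Matrix κ κ 𝕜}
    (hR : Qᵀ * R * Q = 0) (hP : Qᵀ * P = 0) (hS : S = 0) : dissipationMatrix Q R P S = 0 := by
  have hP' : Pᵀ * Q = 0 := by simpa [transpose_mul] using congrArg transpose hP
  rw [dissipationMatrix, hR, hP, hP', hS, fromBlocks_zero]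

theorem dotProduct_dissipationMatrix_mulVec (Q R : Matrix ι ι 𝕜) (P : Matrix ι κ 𝕜)
    (S : Matrix κ κ 𝕜) (x : ι → 𝕜) (u : κ → 𝕜) :
    Sum.elim x u ⬝ᵥ dissipationMatrix Q R P S *ᵥ Sum.elim x u =
      Q *ᵥ x ⬝ᵥ R *ᵥ Q *ᵥ x + 2 * (Q *ᵥ x ⬝ᵥ P *ᵥ u) + u ⬝ᵥ S *ᵥ u := by
  simp only [dissipationMatrix, fromBlocks_mulVec, Sum.elim_comp_inl, Sum.elim_comp_inr,
    sum_elim_dotProduct_sum_elim, mul_assoc, dotProduct_add, ← mulVec_mulVec,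
    dotProduct_transpose_mulVec]
  rw [dotProduct_comm (R *ᵥ _), dotProduct_comm (P *ᵥ u)]
  ring

/-- The left side is `2 dℋ/dt` in the form the product rule produces it. -/
theorem power_balance_pointwise [NoZeroDivisors 𝕜] [CharZero 𝕜] {E Q J R K : Matrix ι ι 𝕜}
    {B P : Matrix ι κ 𝕜} {S N : Matrix κ κ 𝕜} {x x' : ι → 𝕜} {u y : κ → 𝕜}
    (hsym : Qᵀ * E = Eᵀ * Q) (hN : Nᵀ = -N)
    (hode : E *ᵥ x' = ((J - R) * Q - E * K) *ᵥ x + (B - P) *ᵥ u)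
    (hy : y = ((B + P)ᵀ * Q) *ᵥ x + (S + N) *ᵥ u) :
    x' ⬝ᵥ (Qᵀ * E) *ᵥ x +
        x ⬝ᵥ ((Qᵀ * (E * K - J * Q) + (E * K - J * Q)ᵀ * Q) *ᵥ x + (Qᵀ * E) *ᵥ x') =
      2 * (u ⬝ᵥ y - Sum.elim x u ⬝ᵥ dissipationMatrix Q R P S *ᵥ Sum.elim x u) := by
  have hx' : x' ⬝ᵥ (Qᵀ * E) *ᵥ x = x ⬝ᵥ (Qᵀ * E) *ᵥ x' := by
    rw [← dotProduct_transpose_mulVec, transpose_mul, transpose_transpose, ← hsym]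
  have hF : x ⬝ᵥ ((E * K - J * Q)ᵀ * Q) *ᵥ x = Q *ᵥ x ⬝ᵥ (E * K - J * Q) *ᵥ x := by
    rw [← mulVec_mulVec, dotProduct_transpose_mulVec]
  have hE : x ⬝ᵥ (Qᵀ * E) *ᵥ x' =
      Q *ᵥ x ⬝ᵥ ((J - R) * Q - E * K) *ᵥ x + Q *ᵥ x ⬝ᵥ (B - P) *ᵥ u := by
    rw [dotProduct_transpose_mul_mulVec, hode, dotProduct_add]
  have hyu : u ⬝ᵥ y = Q *ᵥ x ⬝ᵥ (B + P) *ᵥ u + u ⬝ᵥ S *ᵥ u := by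
    rw [hy, dotProduct_add, ← mulVec_mulVec, dotProduct_transpose_mulVec, add_mulVec S,
      dotProduct_add, dotProduct_mulVec_self_eq_zero_of_transpose_eq_neg hN, add_zero]
  rw [add_mulVec, dotProduct_add, dotProduct_add, hF, hx', hE, hyu,
    dotProduct_dissipationMatrix_mulVec, dotProduct_transpose_mul_mulVec]
  simp only [sub_mulVec, add_mulVec, dotProduct_sub, dotProduct_add, ← mulVec_mulVec]
  ring

end PowerBalance

theorem pHDAE_exact_power_balance_general
    (n m : ℕ) (t0 tf : ℝ)
    (E Q J R K : ℝ → Matrix (Fin n) (Fin n) ℝ)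
    (B P : ℝ → Matrix (Fin n) (Fin m) ℝ)
    (S N : ℝ → Matrix (Fin m) (Fin m) ℝ)
    (hQc : ContinuousOn Q (Set.Icc t0 tf))
    (hBc : ContinuousOn B (Set.Icc t0 tf))
    (hPc : ContinuousOn P (Set.Icc t0 tf)) (hSc : ContinuousOn S (Set.Icc t0 tf))
    (hNc : ContinuousOn N (Set.Icc t0 tf))
    (hNskew : ∀ t ∈ Set.Icc t0 tf, (N t)ᵀ = -N t)
    (hsym : ∀ t ∈ Set.Icc t0 tf, (Q t)ᵀ * E t = (E t)ᵀ * Q t)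
    (hQE : ∀ t ∈ Set.Icc t0 tf,
      MatHasDerivAt (fun s => (Q s)ᵀ * E s)
        (fun s => (Q s)ᵀ * (E s * K s - J s * Q s) +
          (E s * K s - J s * Q s)ᵀ * Q s) t)
    (u : ℝ → Fin m → ℝ) (huc : ContinuousOn u (Set.Icc t0 tf))
    (x x' : ℝ → Fin n → ℝ)
    (hx : ∀ t ∈ Set.Icc t0 tf, HasDerivAt x (x' t) t)
    (hode : ∀ t ∈ Set.Icc t0 tf, E t *ᵥ x' t =
      ((J t - R t) * Q t - E t * K t) *ᵥ x t + (B t - P t) *ᵥ u t)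
    (y : ℝ → Fin m → ℝ)
    (hy : ∀ t ∈ Set.Icc t0 tf,
      y t = ((B t + P t)ᵀ * Q t) *ᵥ x t + (S t + N t) *ᵥ u t)
    (hR0 : ∀ t ∈ Set.Icc t0 tf, (Q t)ᵀ * R t * Q t = 0)
    (hP0 : ∀ t ∈ Set.Icc t0 tf, (Q t)ᵀ * P t = 0)
    (hS0 : ∀ t ∈ Set.Icc t0 tf, S t = 0) :
    ∀ s t : ℝ, t0 ≤ s → s ≤ t → t ≤ tf →
      (1 / 2 : ℝ) * (x t ⬝ᵥ ((Q t)ᵀ * E t) *ᵥ x t) -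
        (1 / 2 : ℝ) * (x s ⬝ᵥ ((Q s)ᵀ * E s) *ᵥ x s) =
        ∫ τ in s..t, u τ ⬝ᵥ y τ := by
  intro s t hs hst ht
  have hsub : uIcc s t ⊆ Icc t0 tf := by
    rw [uIcc_of_le hst]
    exact Icc_subset_Icc hs ht
  have hder : ∀ τ ∈ Icc t0 tf,
      HasDerivAt (fun σ => (1 / 2 : ℝ) * (x σ ⬝ᵥ ((Q σ)ᵀ * E σ) *ᵥ x σ)) (u τ ⬝ᵥ y τ) τ := by
    intro τ hτ
    refine (((hx τ hτ).dotProduct ((hQE τ hτ).mulVec (hx τ hτ))).const_mul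
      (1 / 2 : ℝ)).congr_deriv ?_
    rw [power_balance_pointwise (hsym τ hτ) (hNskew τ hτ) (hode τ hτ) (hy τ hτ),
      dissipationMatrix_eq_zero (hR0 τ hτ) (hP0 τ hτ) (hS0 τ hτ), zero_mulVec, dotProduct_zero]
    ring
  have hxc : ContinuousOn x (Icc t0 tf) := fun τ hτ => (hx τ hτ).continuousAt.continuousWithinAt
  have hyc : ContinuousOn y (Icc t0 tf) := by
    refine ContinuousOn.congr ?_ hy
    fun_prop
  exact (intervalIntegral.integral_eq_sub_of_hasDerivAt (fun τ hτ => hder τ (hsub hτ))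
    ((huc.dotProduct hyc).mono hsub).intervalIntegrable).symm

/-- Power balance for a linear time-varying port-Hamiltonian descriptor system:
if the dissipation matrix vanishes identically, the Hamiltonian obeys exact power balance. -/
theorem pHDAE_exact_power_balance
    (n m : ℕ) (t0 tf : ℝ) (htf : t0 ≤ tf)
    (E Q J R K : ℝ → Matrix (Fin n) (Fin n) ℝ)
    (B P : ℝ → Matrix (Fin n) (Fin m) ℝ)
    (S N : ℝ → Matrix (Fin m) (Fin m) ℝ)
    (hEc : ContinuousOn E (Set.Icc t0 tf)) (hQc : ContinuousOn Q (Set.Icc t0 tf))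
    (hJc : ContinuousOn J (Set.Icc t0 tf)) (hRc : ContinuousOn R (Set.Icc t0 tf))
    (hKc : ContinuousOn K (Set.Icc t0 tf)) (hBc : ContinuousOn B (Set.Icc t0 tf))
    (hPc : ContinuousOn P (Set.Icc t0 tf)) (hSc : ContinuousOn S (Set.Icc t0 tf))
    (hNc : ContinuousOn N (Set.Icc t0 tf))
    (hSsym : ∀ t ∈ Set.Icc t0 tf, (S t)ᵀ = S t)
    (hNskew : ∀ t ∈ Set.Icc t0 tf, (N t)ᵀ = -N t)
    (hsym : ∀ t ∈ Set.Icc t0 tf, (Q t)ᵀ * E t = (E t)ᵀ * Q t)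
    (hQE : ∀ t ∈ Set.Icc t0 tf,
      MatHasDerivAt (fun s => (Q s)ᵀ * E s)
        (fun s => (Q s)ᵀ * (E s * K s - J s * Q s) +
          (E s * K s - J s * Q s)ᵀ * Q s) t)
    (u : ℝ → Fin m → ℝ) (huc : ContinuousOn u (Set.Icc t0 tf))
    (x x' : ℝ → Fin n → ℝ)
    (hx : ∀ t ∈ Set.Icc t0 tf, HasDerivAt x (x' t) t)
    (hx'c : ContinuousOn x' (Set.Icc t0 tf))
    (hode : ∀ t ∈ Set.Icc t0 tf, E t *ᵥ x' t =
      ((J t - R t) * Q t - E t * K t) *ᵥ x t + (B t - P t) *ᵥ u t)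
    (y : ℝ → Fin m → ℝ)
    (hy : ∀ t ∈ Set.Icc t0 tf,
      y t = ((B t + P t)ᵀ * Q t) *ᵥ x t + (S t + N t) *ᵥ u t)
    (hR0 : ∀ t ∈ Set.Icc t0 tf, (Q t)ᵀ * R t * Q t = 0)
    (hP0 : ∀ t ∈ Set.Icc t0 tf, (Q t)ᵀ * P t = 0)
    (hS0 : ∀ t ∈ Set.Icc t0 tf, S t = 0) :
    ∀ s t : ℝ, t0 ≤ s → s ≤ t → t ≤ tf →
      (1 / 2 : ℝ) * (x t ⬝ᵥ ((Q t)ᵀ * E t) *ᵥ x t) -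
        (1 / 2 : ℝ) * (x s ⬝ᵥ ((Q s)ᵀ * E s) *ᵥ x s) =
        ∫ τ in s..t, u τ ⬝ᵥ y τ :=
  pHDAE_exact_power_balance_general n m t0 tf E Q J R K B P S N hQc hBc hPc hSc hNc hNskew hsym hQE
    u huc x x' hx hode y hy hR0 hP0 hS0
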